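/- For any family 𝒯 of complete L-theories and any n ≥ 1: RS(𝒯) = 2 and ds(𝒯) = n if and only if there are pairwise inconsistent L-sentences φ_1, …, φ_n such that 𝒯 is the disjoint union of the subfamilies 𝒯_{φ_1}, …, 𝒯_{φ_n} and each 𝒯_{φ_i} is a-minimal. -/

import Mathlib

open FirstOrder Language Cardinal Set

universe u v w

variable {L : FirstOrder.Language.{u, v}}

/-- A complete theory: a satisfiable set of sentences containing each sentence or its
negation (`Theory.IsMaximal` in Mathlib). -/
abbrev CTheory (L : FirstOrder.Language.{u, v}) : Type max u v :=
  {T : L.Theory // T.IsMaximal}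

/-- The neighbourhood `𝒯_φ = {T ∈ 𝒯 | φ ∈ T}`. -/
def nbhd (𝒯 : Set (CTheory L)) (φ : L.Sentence) : Set (CTheory L) :=
  {T | T ∈ 𝒯 ∧ φ ∈ T.1}

/-- `T` is an accumulation point of `𝒯` if for every sentence `φ ∈ T` the set `𝒯_φ` is
infinite. -/
def IsAccPoint (𝒯 : Set (CTheory L)) (T : CTheory L) : Prop :=
  ∀ φ : L.Sentence, φ ∈ T.1 → (nbhd 𝒯 φ).Infinite

/-- The `E`-closure of `𝒯`: `𝒯` together with all its accumulation points. -/
def ClE (𝒯 : Set (CTheory L)) : Set (CTheory L) :=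
  𝒯 ∪ {T | IsAccPoint 𝒯 T}

/-- The `e`-spectrum of `𝒯`: the cardinality of the set of accumulation points of `𝒯`. -/
noncomputable def eSp (𝒯 : Set (CTheory L)) : Cardinal :=
  Cardinal.mk {T : CTheory L // IsAccPoint 𝒯 T}

/-- Two sentences are inconsistent if `{φ, ψ}` is unsatisfiable. -/
def Inconsistent (φ ψ : L.Sentence) : Prop :=
  ¬ FirstOrder.Language.Theory.IsSatisfiable ({φ, ψ} : L.Theory)

open Classical in
/-- `RSge α 𝒯` says `RS(𝒯) ≥ α`: `RS(𝒯) ≥ 0` iff `𝒯 ≠ ∅`; `RS(𝒯) ≥ 1` iff `𝒯` is infinite;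
for `β ≥ 1`, `RS(𝒯) ≥ β + 1` iff there are pairwise inconsistent sentences `φ_n`, `n ∈ ℕ`,
with `RS(𝒯_{φ_n}) ≥ β` for all `n`; for limit `λ`, `RS(𝒯) ≥ λ` iff `RS(𝒯) ≥ β` for all
`β < λ`. -/
noncomputable def RSge (α : Ordinal.{w}) : Set (CTheory L) → Prop :=
  @Ordinal.limitRecOn (fun _ => Set (CTheory L) → Prop) α
    (fun 𝒯 => 𝒯.Nonempty)
    (fun β ih 𝒯 =>
      if β = 0 then 𝒯.Infinite
      else ∃ φ : ℕ → L.Sentence,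
        (∀ m n : ℕ, m ≠ n → Inconsistent (φ m) (φ n)) ∧ ∀ k : ℕ, ih (nbhd 𝒯 (φ k)))
    (fun β _ ih 𝒯 => ∀ γ : Ordinal, ∀ h : γ < β, ih γ h 𝒯)

/-- `RS(𝒯) = α` for an ordinal `α`: `RS(𝒯) ≥ α` but not `RS(𝒯) ≥ α + 1`. -/
def RSeq (𝒯 : Set (CTheory L)) (α : Ordinal.{w}) : Prop :=
  RSge α 𝒯 ∧ ¬ RSge (α + 1) 𝒯

/-- `RS(𝒯) = ∞`: `RS(𝒯) ≥ α` for every ordinal `α`. -/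
def RSinf (𝒯 : Set (CTheory L)) : Prop :=
  ∀ α : Ordinal.{w}, RSge α 𝒯

/-- `ds(𝒯) = n` (relative to `RS(𝒯) = α`): `n` is the largest natural number for which
there exist `n` pairwise inconsistent sentences `φ_1, …, φ_n` with `RS(𝒯_{φ_i}) = α`. -/
def dsEq (𝒯 : Set (CTheory L)) (α : Ordinal.{w}) (n : ℕ) : Prop :=
  IsGreatest {m : ℕ | ∃ φ : Fin m → L.Sentence,
    (∀ i j : Fin m, i ≠ j → Inconsistent (φ i) (φ j)) ∧
    ∀ i : Fin m, RSeq (nbhd 𝒯 (φ i)) α} n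

/-- `𝒯` is `e`-minimal: for every sentence `φ`, `𝒯_φ` is finite or `𝒯_{¬φ}` is finite. -/
def EMinimal (𝒯 : Set (CTheory L)) : Prop :=
  ∀ φ : L.Sentence, (nbhd 𝒯 φ).Finite ∨ (nbhd 𝒯 φ.not).Finite

/-- `𝒯` is `a`-minimal: `𝒯` has infinitely many accumulation points and for every sentence
`φ`, `𝒯_φ` or `𝒯_{¬φ}` has only finitely many accumulation points. -/
def AMinimal (𝒯 : Set (CTheory L)) : Prop :=
  {T : CTheory L | IsAccPoint 𝒯 T}.Infinite ∧
  ∀ φ : L.Sentence,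
    {T : CTheory L | IsAccPoint (nbhd 𝒯 φ) T}.Finite ∨
    {T : CTheory L | IsAccPoint (nbhd 𝒯 φ.not) T}.Finite

/-- `𝒯` is `α`-minimal: `RS(𝒯) = α` and for every sentence `φ`, `RS(𝒯_φ) < α` or
`RS(𝒯_{¬φ}) < α`. -/
def AlphaMinimal (𝒯 : Set (CTheory L)) (α : Ordinal.{w}) : Prop :=
  RSeq 𝒯 α ∧
  ∀ φ : L.Sentence, ¬ RSge α (nbhd 𝒯 φ) ∨ ¬ RSge α (nbhd 𝒯 φ.not)

/-! The accumulation points of `𝒯` are its limit points in the Stone space of complete theories.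
By compactness (here: an ultrafilter limit) every infinite family has an accumulation point,
and any infinite set of complete theories is separated by infinitely many pairwise inconsistent
sentences. Hence `RS(𝒯) ≥ 2` iff `𝒯` has infinitely many accumulation points, and `RS(𝒯) ≥ 3`
iff infinitely many pairwise inconsistent sentences cut `𝒯` into pieces with that property.

If `RS(𝒯) = 2` and `ds(𝒯) = n`, take `n` such pieces and enlarge one of them so that they
cover `𝒯`; each piece is `a`-minimal, as splitting it would give `n + 1` pieces. Conversely,
if `𝒯` is covered by `n` `a`-minimal families, pieces cut out by pairwise inconsistent
sentences and having infinitely many accumulation points pick out distinct families, so there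
are at most `n` of them. -/

namespace CTheory

variable {T : CTheory L} {φ ψ : L.Sentence}

theorem exists_eq_completeTheory (T : CTheory L) :
    ∃ M : Theory.ModelType.{u, v, max u v} T.1, T.1 = L.completeTheory M := by
  obtain ⟨M⟩ := T.2.1
  refine ⟨M, Set.Subset.antisymm (fun φ hφ => Theory.realize_sentence_of_mem T.1 hφ)
    fun φ hφ => (T.2.mem_or_not_mem φ).resolve_right fun hnot => ?_⟩
  exact (Sentence.realize_not M).1 (Theory.realize_sentence_of_mem T.1 hnot) hφ

theorem not_mem_iff : φ.not ∈ T.1 ↔ φ ∉ T.1 := by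
  obtain ⟨M, hM⟩ := T.exists_eq_completeTheory
  simp [hM, mem_completeTheory]

theorem inf_mem_iff : φ ⊓ ψ ∈ T.1 ↔ φ ∈ T.1 ∧ ψ ∈ T.1 := by
  obtain ⟨M, hM⟩ := T.exists_eq_completeTheory
  simp [hM, mem_completeTheory]

theorem iInf_mem_iff {ι : Type*} [Finite ι] {f : ι → L.Sentence} :
    BoundedFormula.iInf f ∈ T.1 ↔ ∀ i, f i ∈ T.1 := by
  obtain ⟨M, hM⟩ := T.exists_eq_completeTheory
  simp [hM, mem_completeTheory, Sentence.Realize, Formula.Realize, BoundedFormula.realize_iInf]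

theorem top_mem (T : CTheory L) : ⊤ ∈ T.1 := by
  obtain ⟨M, hM⟩ := T.exists_eq_completeTheory
  simp [hM, mem_completeTheory]

end CTheory

theorem inconsistent_iff {φ ψ : L.Sentence} :
    Inconsistent φ ψ ↔ ∀ T : CTheory L, φ ∈ T.1 → ψ ∉ T.1 := by
  refine ⟨fun h T hφ hψ => h (T.2.1.mono (Set.insert_subset hφ (Set.singleton_subset_iff.2 hψ))),
    fun h ⟨M⟩ => h ⟨L.completeTheory M, completeTheory.isMaximal L M⟩ ?_ ?_⟩
  · exact Theory.realize_sentence_of_mem _ (Set.mem_insert φ {ψ})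
  · exact Theory.realize_sentence_of_mem _ (Set.mem_insert_of_mem φ (Set.mem_singleton ψ))

namespace Inconsistent

variable {φ ψ φ' ψ' : L.Sentence}

theorem not_mem (h : Inconsistent φ ψ) {T : CTheory L} (hφ : φ ∈ T.1) : ψ ∉ T.1 :=
  inconsistent_iff.1 h T hφ

theorem symm (h : Inconsistent φ ψ) : Inconsistent ψ φ :=
  inconsistent_iff.2 fun _ hψ hφ => h.not_mem hφ hψ

theorem of_mem_imp (h : Inconsistent φ ψ) (hφ : ∀ T : CTheory L, φ' ∈ T.1 → φ ∈ T.1)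
    (hψ : ∀ T : CTheory L, ψ' ∈ T.1 → ψ ∈ T.1) : Inconsistent φ' ψ' :=
  inconsistent_iff.2 fun T h' => mt (hψ T) (h.not_mem (hφ T h'))

theorem disjoint_nbhd (h : Inconsistent φ ψ) (𝒳 𝒴 : Set (CTheory L)) :
    Disjoint (nbhd 𝒳 φ) (nbhd 𝒴 ψ) :=
  Set.disjoint_left.2 fun _ hφ hψ => h.not_mem hφ.2 hψ.2

end Inconsistent

theorem inconsistent_inf_not (φ ψ χ : L.Sentence) : Inconsistent (φ ⊓ χ) (ψ ⊓ χ.not) :=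
  inconsistent_iff.2 fun _ h h' =>
    CTheory.not_mem_iff.1 (CTheory.inf_mem_iff.1 h').2 (CTheory.inf_mem_iff.1 h).2

section AccumulationPoints

variable {𝒳 𝒴 : Set (CTheory L)} {φ : L.Sentence} {T : CTheory L}

theorem nbhd_subset (𝒳 : Set (CTheory L)) (φ : L.Sentence) : nbhd 𝒳 φ ⊆ 𝒳 :=
  fun _ h => h.1

theorem nbhd_mono (h : 𝒳 ⊆ 𝒴) (φ : L.Sentence) : nbhd 𝒳 φ ⊆ nbhd 𝒴 φ :=
  fun _ hT => ⟨h hT.1, hT.2⟩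

theorem nbhd_nbhd (𝒳 : Set (CTheory L)) (φ ψ : L.Sentence) :
    nbhd (nbhd 𝒳 φ) ψ = nbhd 𝒳 (φ ⊓ ψ) := by
  ext T
  simp [nbhd, CTheory.inf_mem_iff, and_assoc]

abbrev accSet (𝒳 : Set (CTheory L)) : Set (CTheory L) := {T | IsAccPoint 𝒳 T}

theorem IsAccPoint.mono (h : 𝒳 ⊆ 𝒴) (hT : IsAccPoint 𝒳 T) : IsAccPoint 𝒴 T :=
  fun φ hφ => (hT φ hφ).mono (nbhd_mono h φ)

theorem accSet_mono (h : 𝒳 ⊆ 𝒴) : accSet 𝒳 ⊆ accSet 𝒴 :=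
  fun _ => IsAccPoint.mono h

theorem IsAccPoint.mem_of_nbhd (h : IsAccPoint (nbhd 𝒳 φ) T) : φ ∈ T.1 := by
  by_contra hφ
  exact h _ (CTheory.not_mem_iff.2 hφ)
    (Set.finite_empty.subset fun S hS => CTheory.not_mem_iff.1 hS.2 hS.1.2)

theorem IsAccPoint.exists_of_iUnion {ι : Type*} [Finite ι] {𝒵 : ι → Set (CTheory L)}
    (h : IsAccPoint (⋃ i, 𝒵 i) T) : ∃ i, IsAccPoint (𝒵 i) T := by
  by_contra! hc
  simp only [IsAccPoint, not_forall, Set.not_infinite] at hc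
  choose χ hχ hfin using hc
  refine h _ (CTheory.iInf_mem_iff.2 hχ) ((Set.finite_iUnion hfin).subset ?_)
  rintro S ⟨hS, hSχ⟩
  obtain ⟨i, hi⟩ := Set.mem_iUnion.1 hS
  exact Set.mem_iUnion.2 ⟨i, hi, CTheory.iInf_mem_iff.1 hSχ i⟩

def CTheory.limit (U : Ultrafilter (CTheory L)) : CTheory L :=
  ⟨{φ | {T : CTheory L | φ ∈ T.1} ∈ U}, by
    refine ⟨Theory.isSatisfiable_iff_isFinitelySatisfiable.2 fun T₀ hT₀ => ?_, fun φ => ?_⟩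
    · obtain ⟨S, hS⟩ := U.nonempty_of_mem ((Filter.biInter_finset_mem T₀).2 hT₀)
      exact S.2.1.mono fun φ hφ => Set.mem_iInter₂.1 hS φ hφ
    · exact U.union_mem_iff.1 (Filter.mem_of_superset U.univ_mem fun T _ => T.2.mem_or_not_mem φ)⟩

theorem isAccPoint_limit {U : Ultrafilter (CTheory L)}
    (hU : (U : Filter (CTheory L)) ≤ Filter.cofinite) (h𝒳 : 𝒳 ∈ U) :
    IsAccPoint 𝒳 (CTheory.limit U) := fun _ hφ =>
  Filter.frequently_cofinite_mem_iff_infinite.1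
    ((Filter.Eventually.frequently (Filter.inter_mem h𝒳 hφ)).filter_mono hU)

theorem Set.Infinite.exists_isAccPoint (h : 𝒳.Infinite) : ∃ T, IsAccPoint 𝒳 T := by
  have := h.cofinite_inf_principal_neBot
  have hU := Ultrafilter.of_le (Filter.cofinite ⊓ Filter.principal 𝒳)
  exact ⟨_, isAccPoint_limit (hU.trans inf_le_left)
    (hU (Filter.mem_inf_of_right (Filter.mem_principal_self 𝒳)))⟩

theorem exists_sentence_splitting_infinite {A : Set (CTheory L)} (hA : A.Infinite) :
    ∃ θ : L.Sentence, {T ∈ A | θ ∈ T.1}.Infinite ∧ ∃ T ∈ A, θ ∉ T.1 := by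
  obtain ⟨T₁, h₁, T₂, h₂, hne⟩ := hA.nontrivial
  obtain ⟨θ, hθ₁, hθ₂⟩ : ∃ θ, θ ∈ T₁.1 ∧ θ ∉ T₂.1 := by
    by_contra! hsub
    refine hne (Subtype.ext (Set.Subset.antisymm hsub fun φ hφ => ?_))
    by_contra hφ₁
    exact CTheory.not_mem_iff.1 (hsub _ (CTheory.not_mem_iff.2 hφ₁)) hφ
  have hcover : A ⊆ {T ∈ A | θ ∈ T.1} ∪ {T ∈ A | θ.not ∈ T.1} := fun T hT =>
    (T.2.mem_or_not_mem θ).imp (⟨hT, ·⟩) (⟨hT, ·⟩)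
  rcases Set.infinite_union.1 (hA.mono hcover) with h | h
  · exact ⟨θ, h, T₂, h₂, hθ₂⟩
  · exact ⟨θ.not, h, T₁, h₁, fun h' => CTheory.not_mem_iff.1 h' hθ₁⟩

theorem exists_pairwise_inconsistent_of_infinite {A : Set (CTheory L)} (hA : A.Infinite) :
    ∃ ψ : ℕ → L.Sentence, (Pairwise fun i j => Inconsistent (ψ i) (ψ j)) ∧
      ∀ k, ∃ T ∈ A, ψ k ∈ T.1 := by
  let Big : Set L.Sentence := {χ | {T ∈ A | χ ∈ T.1}.Infinite}
  have hstep : ∀ χ : Big, ∃ θ, χ.1 ⊓ θ ∈ Big ∧ ∃ T ∈ A, χ.1 ⊓ θ.not ∈ T.1 := by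
    rintro ⟨χ, hχ⟩
    obtain ⟨θ, hθ, T, ⟨hTA, hTχ⟩, hTθ⟩ := exists_sentence_splitting_infinite hχ
    refine ⟨θ, ?_, T, hTA, CTheory.inf_mem_iff.2 ⟨hTχ, CTheory.not_mem_iff.2 hTθ⟩⟩
    simpa only [Big, Set.mem_ofPred_eq, CTheory.inf_mem_iff, and_assoc] using hθ
  choose θ hθBig hθT using hstep
  have htop : ⊤ ∈ Big := by simpa [Big, CTheory.top_mem] using hA
  let χ : ℕ → Big := fun k => Nat.rec ⟨⊤, htop⟩ (fun _ c => ⟨c.1 ⊓ θ c, hθBig c⟩) k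
  have hanti : Antitone fun k => {T : CTheory L | (χ k).1 ∈ T.1} :=
    antitone_nat_of_succ_le fun k _ hT => (CTheory.inf_mem_iff.1 hT).1
  -- `χ k` entails `θ (χ m)` for `m < k`, which `ψ m` refutes.
  have hlt : ∀ m k, m < k →
      Inconsistent ((χ m).1 ⊓ (θ (χ m)).not) ((χ k).1 ⊓ (θ (χ k)).not) := by
    intro m k hmk
    refine inconsistent_iff.2 fun T hm hk => CTheory.not_mem_iff.1 (CTheory.inf_mem_iff.1 hm).2 ?_
    exact (CTheory.inf_mem_iff.1 (hanti hmk (CTheory.inf_mem_iff.1 hk).1)).2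
  refine ⟨fun k => (χ k).1 ⊓ (θ (χ k)).not, fun m k hne => ?_, fun k => hθT (χ k)⟩
  rcases hne.lt_or_gt with h | h
  exacts [hlt m k h, (hlt k m h).symm]

theorem accSet_infinite_iff : (accSet 𝒳).Infinite ↔
    ∃ ψ : ℕ → L.Sentence, (Pairwise fun i j => Inconsistent (ψ i) (ψ j)) ∧
      ∀ k, (nbhd 𝒳 (ψ k)).Infinite := by
  constructor
  · intro h
    obtain ⟨ψ, hψ, hmem⟩ := exists_pairwise_inconsistent_of_infinite h
    refine ⟨ψ, hψ, fun k => ?_⟩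
    obtain ⟨T, hT, hψT⟩ := hmem k
    exact hT _ hψT
  · rintro ⟨ψ, hψ, hinf⟩
    choose T hT using fun k => (hinf k).exists_isAccPoint
    refine Set.infinite_of_injective_forall_mem (fun k m hkm => ?_)
      fun k => (hT k).mono (nbhd_subset 𝒳 (ψ k))
    by_contra hne
    exact (hψ hne).not_mem (hT k).mem_of_nbhd (hkm ▸ (hT m).mem_of_nbhd)

end AccumulationPoints

section Rank

variable {𝒯 𝒳 𝒴 : Set (CTheory L)}

theorem rsge_add_one (β : Ordinal.{w}) (𝒯 : Set (CTheory L)) :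
    RSge (β + 1) 𝒯 ↔
      if β = 0 then 𝒯.Infinite
      else ∃ φ : ℕ → L.Sentence, (Pairwise fun m n => Inconsistent (φ m) (φ n)) ∧
        ∀ k : ℕ, RSge β (nbhd 𝒯 (φ k)) := by
  rw [RSge, Ordinal.limitRecOn_add_one]
  rfl

theorem rsge_one : RSge (1 : Ordinal.{w}) 𝒯 ↔ 𝒯.Infinite := by
  rw [← zero_add (1 : Ordinal.{w}), rsge_add_one, if_pos rfl]

theorem rsge_add_one_of_ne_zero {β : Ordinal.{w}} (hβ : β ≠ 0) :
    RSge (β + 1) 𝒯 ↔ ∃ φ : ℕ → L.Sentence, (Pairwise fun m n => Inconsistent (φ m) (φ n)) ∧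
      ∀ k : ℕ, RSge β (nbhd 𝒯 (φ k)) := by
  rw [rsge_add_one, if_neg hβ]

theorem rsge_two : RSge (2 : Ordinal.{w}) 𝒯 ↔ (accSet 𝒯).Infinite := by
  simp only [← one_add_one_eq_two, rsge_add_one_of_ne_zero one_ne_zero, rsge_one,
    accSet_infinite_iff]

/-- `RS(𝒯) ≥ 3` is `AccDivisible 𝒯 ℕ`, and when `RS(𝒯) = 2`, `ds(𝒯)` is the largest `m` with
`AccDivisible 𝒯 (Fin m)`. -/
def AccDivisible (𝒯 : Set (CTheory L)) (ι : Type*) : Prop :=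
  ∃ ψ : ι → L.Sentence, (Pairwise fun i j => Inconsistent (ψ i) (ψ j)) ∧
    ∀ i, (accSet (nbhd 𝒯 (ψ i))).Infinite

theorem rsge_three : RSge ((2 : Ordinal.{w}) + 1) 𝒯 ↔ AccDivisible 𝒯 ℕ := by
  simp only [rsge_add_one_of_ne_zero two_ne_zero, rsge_two, AccDivisible]

theorem AccDivisible.mono {ι : Type*} (h : 𝒳 ⊆ 𝒴) : AccDivisible 𝒳 ι → AccDivisible 𝒴 ι :=
  fun ⟨ψ, hψ, hacc⟩ => ⟨ψ, hψ, fun i => (hacc i).mono (accSet_mono (nbhd_mono h _))⟩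

theorem AccDivisible.comp_embedding {ι κ : Type*} (h : AccDivisible 𝒯 ι) (f : κ ↪ ι) :
    AccDivisible 𝒯 κ :=
  let ⟨ψ, hψ, hacc⟩ := h
  ⟨ψ ∘ f, fun _ _ hne => hψ (f.injective.ne hne), fun k => hacc (f k)⟩

theorem AccDivisible.accSet_infinite {ι : Type*} [Nonempty ι] (h : AccDivisible 𝒯 ι) :
    (accSet 𝒯).Infinite :=
  let ⟨_, _, hacc⟩ := h
  (hacc (Classical.arbitrary ι)).mono (accSet_mono (nbhd_subset _ _))

theorem rseq_two : RSeq 𝒯 (2 : Ordinal.{w}) ↔ (accSet 𝒯).Infinite ∧ ¬ AccDivisible 𝒯 ℕ := by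
  rw [RSeq, rsge_two, rsge_three]

theorem dsEq_two (h : ¬ AccDivisible 𝒯 ℕ) (n : ℕ) :
    dsEq 𝒯 (2 : Ordinal.{w}) n ↔ IsGreatest {m | AccDivisible 𝒯 (Fin m)} n := by
  have hpiece : ∀ φ, RSeq (nbhd 𝒯 φ) (2 : Ordinal.{w}) ↔ (accSet (nbhd 𝒯 φ)).Infinite :=
    fun φ => rseq_two.trans (and_iff_left fun h' => h (h'.mono (nbhd_subset _ _)))
  simp only [dsEq, hpiece]
  rfl

end Rank

section Partition

variable {𝒯 : Set (CTheory L)} {ι : Type*}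

theorem exists_covering_of_pairwise_inconsistent [Finite ι] (i₀ : ι) {ψ : ι → L.Sentence}
    (hψ : Pairwise fun i j => Inconsistent (ψ i) (ψ j)) :
    ∃ φ : ι → L.Sentence, (Pairwise fun i j => Inconsistent (φ i) (φ j)) ∧
      (∀ i (T : CTheory L), ψ i ∈ T.1 → φ i ∈ T.1) ∧ ∀ T : CTheory L, ∃ i, φ i ∈ T.1 := by
  classical
  set φ := Function.update ψ i₀ (BoundedFormula.iInf fun j : {j // j ≠ i₀} => (ψ j).not)
  have hφ₀ : ∀ T : CTheory L, φ i₀ ∈ T.1 ↔ ∀ j, j ≠ i₀ → ψ j ∉ T.1 := fun T => by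
    simp [φ, CTheory.iInf_mem_iff, CTheory.not_mem_iff]
  have hφ : ∀ j, j ≠ i₀ → φ j = ψ j := fun j hj => Function.update_of_ne hj _ _
  refine ⟨φ, fun i j hij => inconsistent_iff.2 fun T hi hj => ?_, fun i T hψT => ?_, fun T => ?_⟩
  · by_cases hi₀ : i = i₀
    · subst hi₀
      exact (hφ₀ T).1 hi j hij.symm (hφ j hij.symm ▸ hj)
    by_cases hj₀ : j = i₀
    · subst hj₀
      exact (hφ₀ T).1 hj i hij (hφ i hij ▸ hi)
    exact (hψ hij).not_mem (hφ i hi₀ ▸ hi) (hφ j hj₀ ▸ hj)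
  · by_cases hi₀ : i = i₀
    · subst hi₀
      exact (hφ₀ T).2 fun j hj => (hψ hj.symm).not_mem hψT
    · exact hφ i hi₀ ▸ hψT
  · by_cases h : ∃ j, j ≠ i₀ ∧ ψ j ∈ T.1
    · obtain ⟨j, hj, hψj⟩ := h
      exact ⟨j, hφ j hj ▸ hψj⟩
    · push Not at h
      exact ⟨i₀, (hφ₀ T).2 h⟩

theorem accDivisible_option_of_not_aMinimal {ψ : ι → L.Sentence}
    (hψ : Pairwise fun i j => Inconsistent (ψ i) (ψ j))
    (hacc : ∀ i, (accSet (nbhd 𝒯 (ψ i))).Infinite) {i : ι} (hi : ¬ AMinimal (nbhd 𝒯 (ψ i))) :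
    AccDivisible 𝒯 (Option ι) := by
  classical
  obtain ⟨χ, hχ, hχnot⟩ : ∃ χ, (accSet (nbhd 𝒯 (ψ i ⊓ χ))).Infinite ∧
      (accSet (nbhd 𝒯 (ψ i ⊓ χ.not))).Infinite := by
    simpa [AMinimal, hacc i, nbhd_nbhd] using hi
  let φ : Option ι → L.Sentence := fun o => o.elim (ψ i ⊓ χ.not) (Function.update ψ i (ψ i ⊓ χ))
  have hφψ : ∀ o T, φ o ∈ (T : CTheory L).1 → ψ (o.getD i) ∈ T.1 := by
    rintro (_ | j) T h
    · exact (CTheory.inf_mem_iff.1 h).1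
    · by_cases hj : j = i
      · subst hj
        simp only [φ, Option.elim_some, Function.update_self] at h
        exact (CTheory.inf_mem_iff.1 h).1
      · simpa [φ, Function.update_of_ne hj] using h
  refine ⟨φ, fun o o' hne => ?_, ?_⟩
  · by_cases hget : o.getD i = o'.getD i
    · rcases o with _ | j <;> rcases o' with _ | j'
      · exact absurd rfl hne
      · obtain rfl : i = j' := hget
        simpa [φ] using (inconsistent_inf_not (ψ i) (ψ i) χ).symm
      · obtain rfl : j = i := hget
        simpa [φ] using inconsistent_inf_not (ψ j) (ψ j) χ
      · exact absurd (congrArg some hget) hne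
    · exact (hψ hget).of_mem_imp (hφψ o) (hφψ o')
  · rintro (_ | j)
    · exact hχnot
    · by_cases hj : j = i
      · subst hj
        simpa [φ] using hχ
      · simpa [φ, Function.update_of_ne hj] using hacc j

theorem AccDivisible.exists_injective [Finite ι] {κ : Type*} {𝒳 : ι → Set (CTheory L)}
    (hcov : 𝒯 ⊆ ⋃ i, 𝒳 i) (hmin : ∀ i, AMinimal (𝒳 i)) (h : AccDivisible 𝒯 κ) :
    ∃ f : κ → ι, Function.Injective f := by
  obtain ⟨ψ, hψ, hacc⟩ := h
  have hpiece : ∀ k, ∃ i, (accSet (nbhd (𝒳 i) (ψ k))).Infinite := by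
    intro k
    by_contra! hfin
    have hsub : nbhd 𝒯 (ψ k) ⊆ ⋃ i, nbhd (𝒳 i) (ψ k) := fun S hS =>
      Set.mem_iUnion.2 ((Set.mem_iUnion.1 (hcov hS.1)).imp fun _ hi => ⟨hi, hS.2⟩)
    exact hacc k ((Set.finite_iUnion hfin).subset fun T hT =>
      Set.mem_iUnion.2 ((hT.mono hsub).exists_of_iUnion))
  choose f hf using hpiece
  -- If `f k = f k'`, the `a`-minimal `𝒳 (f k)` has infinitely many accumulation points on both
  -- sides of `ψ k`, those of `ψ k'` lying on the side of `¬ ψ k`.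
  refine ⟨f, fun k k' hkk' => by_contra fun hne => ?_⟩
  have hsub : nbhd (𝒳 (f k)) (ψ k') ⊆ nbhd (𝒳 (f k)) (ψ k).not := fun S hS =>
    ⟨hS.1, CTheory.not_mem_iff.2 ((hψ hne).symm.not_mem hS.2)⟩
  rcases (hmin (f k)).2 (ψ k) with hfin | hfin
  · exact hf k hfin
  · exact (hkk' ▸ hf k') (hfin.subset (accSet_mono hsub))

theorem aMinimal_nbhd_of_forall_accDivisible_le {n : ℕ}
    (hmax : ∀ m, AccDivisible 𝒯 (Fin m) → m ≤ n) {ψ : Fin n → L.Sentence}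
    (hψ : Pairwise fun i j => Inconsistent (ψ i) (ψ j))
    (hacc : ∀ i, (accSet (nbhd 𝒯 (ψ i))).Infinite) (i : Fin n) :
    AMinimal (nbhd 𝒯 (ψ i)) := by
  by_contra hi
  have := hmax (n + 1) ((accDivisible_option_of_not_aMinimal hψ hacc hi).comp_embedding
    (finSuccEquiv n).toEmbedding)
  omega

end Partition

/-- Theorem 2.12: `RS(𝒯) = 2` with `ds(𝒯) = n` if and only if `𝒯` is a
disjoint union of subfamilies `𝒯_{φ_1}, …, 𝒯_{φ_n}`, for some pairwise inconsistent
sentences `φ_1, …, φ_n`, each of which is `a`-minimal. -/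
theorem rank_two_iff_aMinimal_partition (𝒯 : Set (CTheory L)) (n : ℕ) (hn : 1 ≤ n) :
    (RSeq 𝒯 2 ∧ dsEq 𝒯 2 n) ↔
    ∃ φ : Fin n → L.Sentence,
      (∀ i j : Fin n, i ≠ j → Inconsistent (φ i) (φ j)) ∧
      (∀ i j : Fin n, i ≠ j → Disjoint (nbhd 𝒯 (φ i)) (nbhd 𝒯 (φ j))) ∧
      (⋃ i : Fin n, nbhd 𝒯 (φ i)) = 𝒯 ∧
      ∀ i : Fin n, AMinimal (nbhd 𝒯 (φ i)) := by
  rw [rseq_two]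
  constructor
  · rintro ⟨⟨-, hℕ⟩, hds⟩
    obtain ⟨⟨ψ, hψ, hacc⟩, hmax⟩ := (dsEq_two hℕ n).1 hds
    obtain ⟨φ, hφ, hψφ, hcover⟩ := exists_covering_of_pairwise_inconsistent ⟨0, hn⟩ hψ
    have hφacc : ∀ i, (accSet (nbhd 𝒯 (φ i))).Infinite := fun i =>
      (hacc i).mono (accSet_mono fun T hT => ⟨hT.1, hψφ i T hT.2⟩)
    refine ⟨φ, fun i j hij => hφ hij, fun i j hij => (hφ hij).disjoint_nbhd 𝒯 𝒯,
      Set.Subset.antisymm (Set.iUnion_subset fun i => nbhd_subset 𝒯 (φ i)) fun T hT =>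
        Set.mem_iUnion.2 ((hcover T).imp fun _ hi => ⟨hT, hi⟩),
      aMinimal_nbhd_of_forall_accDivisible_le hmax hφ hφacc⟩
  · rintro ⟨φ, hφ, -, hcov, hmin⟩
    have hinj : ∀ κ : Type, AccDivisible 𝒯 κ → ∃ f : κ → Fin n, Function.Injective f :=
      fun _ h => h.exists_injective hcov.symm.subset hmin
    have hℕ : ¬ AccDivisible 𝒯 ℕ := fun h =>
      let ⟨f, hf⟩ := hinj ℕ h
      not_injective_infinite_finite f hf
    have hφdiv : AccDivisible 𝒯 (Fin n) := ⟨φ, fun i j hij => hφ i j hij, fun i => (hmin i).1⟩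
    have : Nonempty (Fin n) := ⟨⟨0, hn⟩⟩
    refine ⟨⟨hφdiv.accSet_infinite, hℕ⟩, (dsEq_two hℕ n).2 ⟨hφdiv, fun m hm => ?_⟩⟩
    obtain ⟨f, hf⟩ := hinj _ hm
    simpa using Fintype.card_le_of_injective f hf
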